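/- arXiv:2503.01034 — 3 statements merged into one kernel-verified Lean document; each statement's English description precedes it below -/
import Mathlib

section
/- Let X be a finite set of n points in ℝ^d and A ⊆ X a subset of k points with 1 ≤ k < n. Let ν be a σ-finite measure on ℝ^d and for each z ∈ X let q(·|z) : ℝ^d → (0,∞) be an everywhere strictly positive measurable probability density with respect to ν. Let g(·, z) : ℝ^d → ℝ be measurable with ∫ g(m, z) q(m|z) dν(m) finite for every z ∈ X. For λ ∈ [0,1] define the SISS loss ℓ_λ as the average over x ∈ X and a ∈ A of ∫ [ (n/(n−k)) · (q(m|x)/q_λ(m|x,a)) · g(m, x) − (k/(n−k)) · (q(m|a)/q_λ(m|x,a)) · g(m, a) ] · q_λ(m|x,a) dν(m), where q_λ(m|x,a) = (1−λ)q(m|x) + λq(m|a). Then for every λ ∈ [0,1], ℓ_λ equals the naive deletion loss: ℓ_λ = (1/(n−k)) Σ_{x ∈ X\A} ∫ g(m, x) q(m|x) dν(m). -/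
open MeasureTheory

/-! The pointwise identity `(c₁ (p/Q) u - c₂ (r/Q) v) Q = c₁ u p - c₂ v r`, valid wherever the
defensive mixture `Q` is nonzero, makes each SISS summand the difference of two naive losses,
independently of `λ`. Averaging over `X × A`, the weights `n/(n-k)` and `k/(n-k)` turn the double
sum into `(∑_X - ∑_A)/(n-k)`, which is the naive loss on `X \ A`. -/

lemma convex_combination_pos {a b t : ℝ} (ha : 0 < a) (hb : 0 < b) (ht : t ∈ Set.Icc (0 : ℝ) 1) :
    0 < (1 - t) * a + t * b :=
  convex_Ioi (0 : ℝ) ha hb (by linarith [ht.2]) ht.1 (by ring)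

lemma integral_importance_weighted_sub {α : Type*} [MeasurableSpace α] {ν : Measure α}
    {p r Q u v : α → ℝ} (hQ : ∀ᵐ m ∂ν, Q m ≠ 0)
    (hu : Integrable (fun m => u m * p m) ν) (hv : Integrable (fun m => v m * r m) ν)
    (c₁ c₂ : ℝ) :
    ∫ m, (c₁ * (p m / Q m) * u m - c₂ * (r m / Q m) * v m) * Q m ∂ν
      = c₁ * ∫ m, u m * p m ∂ν - c₂ * ∫ m, v m * r m ∂ν := by
  have hpointwise : (fun m => (c₁ * (p m / Q m) * u m - c₂ * (r m / Q m) * v m) * Q m)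
      =ᵐ[ν] fun m => c₁ * (u m * p m) - c₂ * (v m * r m) := by
    filter_upwards [hQ] with m hm
    field_simp
  rw [integral_congr_ae hpointwise, integral_sub (hu.const_mul c₁) (hv.const_mul c₂),
    integral_const_mul, integral_const_mul]

lemma inv_card_mul_sum_sum_sub_eq_sum_sdiff {ι K : Type*} [DecidableEq ι] [Field K] [CharZero K]
    {X A : Finset ι} (hA : A ⊆ X) (hk : 1 ≤ A.card) (f : ι → K) :
    ((X.card : K) * A.card)⁻¹ *
        ∑ x ∈ X, ∑ a ∈ A,
          ((X.card : K) / (X.card - A.card) * f x - (A.card : K) / (X.card - A.card) * f a)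
      = 1 / ((X.card : K) - A.card) * ∑ x ∈ X \ A, f x := by
  have hXA := Finset.card_le_card hA
  have hk0 : (A.card : K) ≠ 0 := by exact_mod_cast (by omega : A.card ≠ 0)
  have hn0 : (X.card : K) ≠ 0 := by exact_mod_cast (by omega : X.card ≠ 0)
  have hcancel : ((X.card : K) * A.card)⁻¹ * (X.card * A.card) = 1 :=
    inv_mul_cancel₀ (mul_ne_zero hn0 hk0)
  simp only [Finset.sum_sub_distrib, Finset.sum_const, nsmul_eq_mul, ← Finset.mul_sum,
    Finset.sum_sdiff_eq_sub hA, div_eq_mul_inv]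
  linear_combination
    ((X.card : K) - A.card)⁻¹ * ((∑ x ∈ X, f x) - ∑ a ∈ A, f a) * hcancel

theorem siss_equals_naive_deletion_general {d : ℕ} [DecidableEq (EuclideanSpace ℝ (Fin d))]
    (X A : Finset (EuclideanSpace ℝ (Fin d)))
    (hA : A ⊆ X) (hk : 1 ≤ A.card)
    (ν : Measure (EuclideanSpace ℝ (Fin d)))
    (q : EuclideanSpace ℝ (Fin d) → EuclideanSpace ℝ (Fin d) → ℝ)
    (hqpos : ∀ z ∈ X, ∀ m, 0 < q z m)
    (g : EuclideanSpace ℝ (Fin d) → EuclideanSpace ℝ (Fin d) → ℝ)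
    (hgint : ∀ z ∈ X, Integrable (fun m => g m z * q z m) ν)
    (lam : ℝ) (hlam : lam ∈ Set.Icc (0 : ℝ) 1) :
    ((X.card : ℝ) * (A.card : ℝ))⁻¹ *
      ∑ x ∈ X, ∑ a ∈ A,
        ∫ m,
          (((X.card : ℝ) / ((X.card : ℝ) - (A.card : ℝ)))
              * (q x m / ((1 - lam) * q x m + lam * q a m)) * g m x
            - ((A.card : ℝ) / ((X.card : ℝ) - (A.card : ℝ)))
              * (q a m / ((1 - lam) * q x m + lam * q a m)) * g m a)
          * ((1 - lam) * q x m + lam * q a m) ∂ν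
    = (1 / ((X.card : ℝ) - (A.card : ℝ))) * ∑ x ∈ X \ A, ∫ m, g m x * q x m ∂ν := by
  have hpair : ∀ x ∈ X, ∀ a ∈ A,
      ∫ m, (((X.card : ℝ) / ((X.card : ℝ) - (A.card : ℝ)))
              * (q x m / ((1 - lam) * q x m + lam * q a m)) * g m x
            - ((A.card : ℝ) / ((X.card : ℝ) - (A.card : ℝ)))
              * (q a m / ((1 - lam) * q x m + lam * q a m)) * g m a)
          * ((1 - lam) * q x m + lam * q a m) ∂ν
        = (X.card : ℝ) / (X.card - A.card) * ∫ m, g m x * q x m ∂ν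
          - (A.card : ℝ) / (X.card - A.card) * ∫ m, g m a * q a m ∂ν := fun x hx a ha =>
    integral_importance_weighted_sub
      (.of_forall fun m => (convex_combination_pos (hqpos x hx m) (hqpos a (hA ha) m) hlam).ne')
      (hgint x hx) (hgint a (hA ha)) _ _
  rw [Finset.sum_congr rfl fun x hx => Finset.sum_congr rfl (hpair x hx)]
  exact inv_card_mul_sum_sum_sub_eq_sum_sdiff hA hk _

/-- The SISS loss `ℓ_λ` equals the naive deletion loss `L_{X\A}` for every
`λ ∈ [0,1]`. -/
theorem siss_equals_naive_deletion {d : ℕ} [DecidableEq (EuclideanSpace ℝ (Fin d))]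
    (X A : Finset (EuclideanSpace ℝ (Fin d)))
    (hA : A ⊆ X) (hk : 1 ≤ A.card) (hkn : A.card < X.card)
    (ν : Measure (EuclideanSpace ℝ (Fin d))) [SigmaFinite ν]
    (q : EuclideanSpace ℝ (Fin d) → EuclideanSpace ℝ (Fin d) → ℝ)
    (hqm : ∀ z ∈ X, Measurable (q z))
    (hqpos : ∀ z ∈ X, ∀ m, 0 < q z m)
    (hqP : ∀ z ∈ X,
      IsProbabilityMeasure (ν.withDensity (fun m => ENNReal.ofReal (q z m))))
    (g : EuclideanSpace ℝ (Fin d) → EuclideanSpace ℝ (Fin d) → ℝ)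
    (hgm : ∀ z ∈ X, Measurable (fun m => g m z))
    (hgint : ∀ z ∈ X, Integrable (fun m => g m z * q z m) ν)
    (lam : ℝ) (hlam : lam ∈ Set.Icc (0 : ℝ) 1) :
    ((X.card : ℝ) * (A.card : ℝ))⁻¹ *
      ∑ x ∈ X, ∑ a ∈ A,
        ∫ m,
          (((X.card : ℝ) / ((X.card : ℝ) - (A.card : ℝ)))
              * (q x m / ((1 - lam) * q x m + lam * q a m)) * g m x
            - ((A.card : ℝ) / ((X.card : ℝ) - (A.card : ℝ)))
              * (q a m / ((1 - lam) * q x m + lam * q a m)) * g m a)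
          * ((1 - lam) * q x m + lam * q a m) ∂ν
    = (1 / ((X.card : ℝ) - (A.card : ℝ))) * ∑ x ∈ X \ A, ∫ m, g m x * q x m ∂ν :=
  siss_equals_naive_deletion_general X A hA hk ν q hqpos g hgint lam hlam
end

section
/- Let X be a finite set of n points in ℝ^d and A ⊆ X a subset of k points with 1 ≤ k < n. Let ν be a σ-finite measure on ℝ^d, for each z ∈ X let q(·|z) : ℝ^d → (0,∞) be an everywhere strictly positive measurable probability density with respect to ν, and let g(·, z) : ℝ^d → ℝ be measurable with ∫ g(m, z) q(m|z) dν(m) finite for every z ∈ X. Fix λ ∈ [0,1] and s > 0, and define the weighted SISS loss ℓ_{s,λ} as the average over x ∈ X and a ∈ A of ∫ [ (n/(n−k)) · (q(m|x)/q_λ(m|x,a)) · g(m, x) − (1+s) · (k/(n−k)) · (q(m|a)/q_λ(m|x,a)) · g(m, a) ] · q_λ(m|x,a) dν(m), where q_λ(m|x,a) = (1−λ)q(m|x) + λq(m|a). Then ℓ_{s,λ} = L_{X\A} − s · (k/(n−k)) · L_A, where L_{X\A} = (1/(n−k)) Σ_{x ∈ X\A} ∫ g(m, x) q(m|x) dν(m)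 is the naive deletion loss and L_A = (1/k) Σ_{a ∈ A} ∫ g(m, a) q(m|a) dν(m) is the NegGrad loss. -/
open MeasureTheory

/-! Dividing by the mixture density `q_λ(m|x,a)` and multiplying back by it cancels, so each
summand of `ℓ_{s,λ}` splits as `n/(n−k) · E_x − (1+s)k/(n−k) · E_a` with `E_z = ∫ g(·,z) q(·|z) dν`.
Averaging over `X × A` and writing `Σ_X = Σ_{X∖A} + Σ_A`, the `Σ_A` terms combine into
`−s/(n−k) · Σ_A`. -/

lemma mixture_pos {u v lam : ℝ} (hu : 0 < u) (hv : 0 < v) (hlam : lam ∈ Set.Icc (0 : ℝ) 1) :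
    0 < (1 - lam) * u + lam * v :=
  convex_Ioi (0 : ℝ) hu hv (sub_nonneg.2 hlam.2) hlam.1 (sub_add_cancel 1 lam)

lemma integral_reweighted_sub {α : Type*} [MeasurableSpace α] {μ : Measure α}
    {w p r f h : α → ℝ} (hw : ∀ᵐ m ∂μ, w m ≠ 0)
    (hf : Integrable (fun m => f m * p m) μ) (hh : Integrable (fun m => h m * r m) μ) (b c : ℝ) :
    ∫ m, (b * (p m / w m) * f m - c * (r m / w m) * h m) * w m ∂μ
      = b * ∫ m, f m * p m ∂μ - c * ∫ m, h m * r m ∂μ := by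
  have hcancel : (fun m => (b * (p m / w m) * f m - c * (r m / w m) * h m) * w m)
      =ᵐ[μ] fun m => b * (f m * p m) - c * (h m * r m) := by
    filter_upwards [hw] with m hm
    field_simp
  rw [integral_congr_ae hcancel, integral_sub (hf.const_mul b) (hh.const_mul c),
    integral_const_mul, integral_const_mul]

lemma Finset.sum_sum_mul_sub_mul {ι : Type*} (X A : Finset ι) (F : ι → ℝ) (b c : ℝ) :
    ∑ x ∈ X, ∑ a ∈ A, (b * F x - c * F a)
      = A.card * b * ∑ x ∈ X, F x - X.card * c * ∑ a ∈ A, F a := by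
  simp only [Finset.sum_sub_distrib, Finset.sum_const, nsmul_eq_mul, ← Finset.mul_sum]
  ring

lemma siss_coefficients {n k s S T : ℝ} (hn : n ≠ 0) (hk : k ≠ 0) :
    (n * k)⁻¹ * (k * (n / (n - k)) * (S + T) - n * ((1 + s) * (k / (n - k))) * T)
      = 1 / (n - k) * S - s * (k / (n - k)) * (1 / k * T) := by
  field_simp
  ring

theorem weighted_siss_decomposition_general {d : ℕ} [DecidableEq (EuclideanSpace ℝ (Fin d))]
    (X A : Finset (EuclideanSpace ℝ (Fin d)))
    (hA : A ⊆ X) (hk : 1 ≤ A.card)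
    (ν : Measure (EuclideanSpace ℝ (Fin d)))
    (q : EuclideanSpace ℝ (Fin d) → EuclideanSpace ℝ (Fin d) → ℝ)
    (hqpos : ∀ z ∈ X, ∀ m, 0 < q z m)
    (g : EuclideanSpace ℝ (Fin d) → EuclideanSpace ℝ (Fin d) → ℝ)
    (hgint : ∀ z ∈ X, Integrable (fun m => g m z * q z m) ν)
    (lam : ℝ) (hlam : lam ∈ Set.Icc (0 : ℝ) 1)
    (s : ℝ) :
    ((X.card : ℝ) * (A.card : ℝ))⁻¹ *
      ∑ x ∈ X, ∑ a ∈ A,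
        ∫ m,
          (((X.card : ℝ) / ((X.card : ℝ) - (A.card : ℝ)))
              * (q x m / ((1 - lam) * q x m + lam * q a m)) * g m x
            - (1 + s) * ((A.card : ℝ) / ((X.card : ℝ) - (A.card : ℝ)))
              * (q a m / ((1 - lam) * q x m + lam * q a m)) * g m a)
          * ((1 - lam) * q x m + lam * q a m) ∂ν
    = (1 / ((X.card : ℝ) - (A.card : ℝ))) * (∑ x ∈ X \ A, ∫ m, g m x * q x m ∂ν)
      - s * ((A.card : ℝ) / ((X.card : ℝ) - (A.card : ℝ)))
          * ((1 / (A.card : ℝ)) * ∑ a ∈ A, ∫ m, g m a * q a m ∂ν) := by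
  have hk0 : (A.card : ℝ) ≠ 0 := by positivity
  have hn0 : (X.card : ℝ) ≠ 0 := by
    have : 1 ≤ X.card := hk.trans (Finset.card_le_card hA)
    positivity
  rw [Finset.sum_congr rfl fun x hx => Finset.sum_congr rfl fun a ha =>
      integral_reweighted_sub
        (ae_of_all ν fun m => (mixture_pos (hqpos x hx m) (hqpos a (hA ha) m) hlam).ne')
        (hgint x hx) (hgint a (hA ha)) _ _,
    Finset.sum_sum_mul_sub_mul, ← Finset.sum_sdiff hA]
  exact siss_coefficients hn0 hk0

/-- The weighted SISS loss `ℓ_{s,λ}` (with superfactor `s > 0`) decomposes as the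
naive deletion loss minus `s·(k/(n−k))` times the NegGrad loss. -/
theorem weighted_siss_decomposition {d : ℕ} [DecidableEq (EuclideanSpace ℝ (Fin d))]
    (X A : Finset (EuclideanSpace ℝ (Fin d)))
    (hA : A ⊆ X) (hk : 1 ≤ A.card) (hkn : A.card < X.card)
    (ν : Measure (EuclideanSpace ℝ (Fin d))) [SigmaFinite ν]
    (q : EuclideanSpace ℝ (Fin d) → EuclideanSpace ℝ (Fin d) → ℝ)
    (hqm : ∀ z ∈ X, Measurable (q z))
    (hqpos : ∀ z ∈ X, ∀ m, 0 < q z m)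
    (hqP : ∀ z ∈ X,
      IsProbabilityMeasure (ν.withDensity (fun m => ENNReal.ofReal (q z m))))
    (g : EuclideanSpace ℝ (Fin d) → EuclideanSpace ℝ (Fin d) → ℝ)
    (hgm : ∀ z ∈ X, Measurable (fun m => g m z))
    (hgint : ∀ z ∈ X, Integrable (fun m => g m z * q z m) ν)
    (lam : ℝ) (hlam : lam ∈ Set.Icc (0 : ℝ) 1)
    (s : ℝ) (hs : 0 < s) :
    ((X.card : ℝ) * (A.card : ℝ))⁻¹ *
      ∑ x ∈ X, ∑ a ∈ A,
        ∫ m,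
          (((X.card : ℝ) / ((X.card : ℝ) - (A.card : ℝ)))
              * (q x m / ((1 - lam) * q x m + lam * q a m)) * g m x
            - (1 + s) * ((A.card : ℝ) / ((X.card : ℝ) - (A.card : ℝ)))
              * (q a m / ((1 - lam) * q x m + lam * q a m)) * g m a)
          * ((1 - lam) * q x m + lam * q a m) ∂ν
    = (1 / ((X.card : ℝ) - (A.card : ℝ))) * (∑ x ∈ X \ A, ∫ m, g m x * q x m ∂ν)
      - s * ((A.card : ℝ) / ((X.card : ℝ) - (A.card : ℝ)))
          * ((1 / (A.card : ℝ)) * ∑ a ∈ A, ∫ m, g m a * q a m ∂ν) :=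
  weighted_siss_decomposition_general X A hA hk ν q hqpos g hgint lam hlam s
end

section
/- (Convergence of perturbed gradient descent.) Let f : E → ℝ be a differentiable function on E = ℝ^n whose gradient is Lipschitz continuous with constant L > 0, and suppose f is bounded below by f* (f(x) ≥ f* for all x). Fix p ∈ [0,1) and a step size t > 0 such that 1 − p − ε > 0, where ε = (1/2)Lt + Ltp + (1/2)Ltp². Consider iterates x₀, x₁, x₂, … with x_{k+1} = x_k − t(∇f(x_k) + v_k), where each perturbation satisfies ‖v_k‖ ≤ p‖∇f(x_k)‖. Then for every integer T ≥ 1, (1 − p − ε) · t · Σ_{k=0}^{T−1} ‖∇f(x_k)‖² ≤ f(x₀) − f*, and consequently min_{0 ≤ k < T} ‖∇f(x_k)‖² ≤ (f(x₀) − f*) / ((1 − p − ε) · t · T); in particular, for every δ > 0 there exists an index k with ‖∇f(x_k)‖ ≤ δ after at most ⌈(f(x₀) − f*) / ((1 − p − ε) t δ²)⌉ iterations. -/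
/-!
Along the segment from `a` to `b`, the `L`-Lipschitz gradient makes
`s ↦ f (a + s • (b - a)) - s ⟪∇f a, b - a⟫ - (L / 2) s² ‖b - a‖²` antitone, which gives the
descent lemma `f b ≤ f a + ⟪∇f a, b - a⟫ + (L / 2) ‖b - a‖²`. For a perturbed step
`b = a - t (∇f a + v)` with `‖v‖ ≤ p ‖∇f a‖`, Cauchy–Schwarz bounds the linear term by
`-(1 - p) t ‖∇f a‖²` and the quadratic one by `(L / 2) t² (1 + p)² ‖∇f a‖²`, so each step
decreases `f` by at least `(1 - p - ε) t ‖∇f a‖²`. Telescoping and `f ≥ f*` bound the sum of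
the squared gradient norms, and the smallest term is at most the average.
-/

open Finset RealInnerProductSpace

/-- The factor `1 - p - ε` of the perturbed descent lemma, `ε = Lt/2 + Ltp + Ltp²/2`. -/
noncomputable def perturbedDescentFactor (L t p : ℝ) : ℝ :=
  1 - p - ((1 / 2) * L * t + L * t * p + (1 / 2) * L * t * p ^ 2)

section Descent

variable {E : Type*} [NormedAddCommGroup E] [InnerProductSpace ℝ E]

theorem inner_neg_smul_add_le_of_norm_le {g w : E} {L t p : ℝ} (hL : 0 ≤ L) (ht : 0 ≤ t)
    (hw : ‖w‖ ≤ p * ‖g‖) :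
    ⟪g, -(t • (g + w))⟫ + L / 2 * ‖-(t • (g + w))‖ ^ 2 ≤
      -(perturbedDescentFactor L t p * t * ‖g‖ ^ 2) := by
  have hlinear : -⟪g, w⟫ ≤ p * ‖g‖ ^ 2 :=
    calc -⟪g, w⟫ ≤ ‖g‖ * ‖w‖ := neg_le.mp (neg_le_of_abs_le (abs_real_inner_le_norm g w))
      _ ≤ ‖g‖ * (p * ‖g‖) := by gcongr
      _ = p * ‖g‖ ^ 2 := by ring
  have hnorm : ‖-(t • (g + w))‖ ≤ t * (1 + p) * ‖g‖ :=
    calc ‖-(t • (g + w))‖ = t * ‖g + w‖ := by rw [norm_neg, norm_smul, Real.norm_of_nonneg ht]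
      _ ≤ t * (‖g‖ + p * ‖g‖) := by gcongr; exact (norm_add_le g w).trans (by gcongr)
      _ = t * (1 + p) * ‖g‖ := by ring
  have hquad : L / 2 * ‖-(t • (g + w))‖ ^ 2 ≤ L / 2 * (t * (1 + p) * ‖g‖) ^ 2 := by
    gcongr
  rw [inner_neg_right, real_inner_smul_right, inner_add_right, real_inner_self_eq_norm_sq]
  unfold perturbedDescentFactor
  nlinarith

variable [CompleteSpace E] {f : E → ℝ} {f' : E → E}

theorem hasDerivAt_comp_add_smul (hf : ∀ x, HasGradientAt f (f' x) x) (a d : E) (s : ℝ) :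
    HasDerivAt (fun s : ℝ => f (a + s • d)) ⟪f' (a + s • d), d⟫ s := by
  have hline : HasDerivAt (fun s : ℝ => a + s • d) d s := by
    simpa using ((hasDerivAt_id s).smul_const d).const_add a
  simpa [Function.comp_def] using (hf (a + s • d)).hasFDerivAt.comp_hasDerivAt s hline

theorem le_add_inner_add_sq_of_lipschitz_gradient (hf : ∀ x, HasGradientAt f (f' x) x) {L : ℝ}
    (hlip : ∀ x y, ‖f' x - f' y‖ ≤ L * ‖x - y‖) (a b : E) :
    f b ≤ f a + ⟪f' a, b - a⟫ + L / 2 * ‖b - a‖ ^ 2 := by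
  set d := b - a
  set φ : ℝ → ℝ := fun s => f (a + s • d) - s * ⟪f' a, d⟫ - L / 2 * s ^ 2 * ‖d‖ ^ 2
  have hφ : ∀ s, HasDerivAt φ (⟪f' (a + s • d) - f' a, d⟫ - L * s * ‖d‖ ^ 2) s := by
    intro s
    have hquad := ((hasDerivAt_pow 2 s).const_mul (L / 2)).mul_const (‖d‖ ^ 2)
    refine (((hasDerivAt_comp_add_smul hf a d s).sub
      ((hasDerivAt_id s).mul_const ⟪f' a, d⟫)).sub hquad).congr_deriv ?_
    rw [inner_sub_left]
    push_cast
    ring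
  have hanti : AntitoneOn φ (Set.Icc 0 1) := by
    refine antitoneOn_of_hasDerivWithinAt_nonpos (convex_Icc 0 1)
      (fun s _ => (hφ s).continuousAt.continuousWithinAt)
      (fun s _ => (hφ s).hasDerivWithinAt) ?_
    intro s hs
    rw [interior_Icc] at hs
    have hgrowth : ⟪f' (a + s • d) - f' a, d⟫ ≤ L * s * ‖d‖ ^ 2 :=
      calc ⟪f' (a + s • d) - f' a, d⟫ ≤ ‖f' (a + s • d) - f' a‖ * ‖d‖ := real_inner_le_norm _ _
        _ ≤ L * ‖(a + s • d) - a‖ * ‖d‖ := by gcongr; exact hlip _ _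
        _ = L * s * ‖d‖ ^ 2 := by
          rw [add_sub_cancel_left, norm_smul, Real.norm_of_nonneg hs.1.le]; ring
    linarith
  have h01 := hanti (Set.left_mem_Icc.2 zero_le_one) (Set.right_mem_Icc.2 zero_le_one) zero_le_one
  simp only [φ, d, zero_smul, one_smul, add_zero, add_sub_cancel] at h01
  linarith

theorem le_sub_of_perturbed_gradient_step (hf : ∀ x, HasGradientAt f (f' x) x) {L t p : ℝ}
    (hL : 0 ≤ L) (hlip : ∀ x y, ‖f' x - f' y‖ ≤ L * ‖x - y‖) (ht : 0 ≤ t) {a w : E}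
    (hw : ‖w‖ ≤ p * ‖f' a‖) :
    perturbedDescentFactor L t p * t * ‖f' a‖ ^ 2 ≤ f a - f (a - t • (f' a + w)) := by
  have hdescent := le_add_inner_add_sq_of_lipschitz_gradient hf hlip a (a - t • (f' a + w))
  rw [sub_sub_cancel_left] at hdescent
  linarith [inner_neg_smul_add_le_of_norm_le hL ht hw]

end Descent

theorem mul_sum_range_le_sub_of_mul_le_sub {a u : ℕ → ℝ} {c : ℝ}
    (h : ∀ k, c * a k ≤ u k - u (k + 1)) (T : ℕ) :
    c * ∑ k ∈ range T, a k ≤ u 0 - u T := by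
  rw [mul_sum, ← sum_range_sub']
  exact sum_le_sum fun k _ => h k

theorem exists_lt_le_div_of_mul_sum_range_le {a : ℕ → ℝ} {C B : ℝ} (hC : 0 < C) {T : ℕ}
    (hT : 0 < T) (h : C * ∑ k ∈ range T, a k ≤ B) : ∃ k < T, a k ≤ B / (C * T) := by
  have hsum : ∑ k ∈ range T, a k ≤ ∑ _k ∈ range T, B / (C * T) := by
    have hT' : (T : ℝ) ≠ 0 := by positivity
    have hmean : (T : ℝ) * (B / (C * T)) = B / C := by field_simp
    rwa [sum_const, card_range, nsmul_eq_mul, hmean, le_div_iff₀' hC]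
  obtain ⟨k, hk, hle⟩ := exists_le_of_sum_le (nonempty_range_iff.2 hT.ne') hsum
  exact ⟨k, mem_range.1 hk, hle⟩

theorem exists_le_ceil_le_of_mul_sum_range_le {a : ℕ → ℝ} {C B : ℝ} (hC : 0 < C)
    (h : ∀ T, C * ∑ k ∈ range T, a k ≤ B) {δ : ℝ} (hδ : 0 < δ) :
    ∃ k ≤ ⌈B / (C * δ)⌉₊, a k ≤ δ := by
  set N := ⌈B / (C * δ)⌉₊
  obtain ⟨k, hk, hle⟩ := exists_lt_le_div_of_mul_sum_range_le hC N.succ_pos (h (N + 1))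
  refine ⟨k, Nat.lt_succ_iff.1 hk, hle.trans ?_⟩
  have hN : B / (C * δ) ≤ N + 1 := (Nat.le_ceil _).trans (by linarith)
  rw [div_le_iff₀ (by positivity)] at hN ⊢
  push_cast
  nlinarith

theorem perturbed_gradient_descent_convergence_general {n : ℕ}
    (f : EuclideanSpace ℝ (Fin n) → ℝ)
    (f' : EuclideanSpace ℝ (Fin n) → EuclideanSpace ℝ (Fin n))
    (hdiff : ∀ x, HasGradientAt f (f' x) x)
    (L : ℝ) (hL : 0 < L)
    (hlip : ∀ x y, ‖f' x - f' y‖ ≤ L * ‖x - y‖)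
    (fstar : ℝ) (hbdd : ∀ x, fstar ≤ f x)
    (p : ℝ)
    (t : ℝ) (ht : 0 < t)
    (heps : 0 < 1 - p - ((1 / 2) * L * t + L * t * p + (1 / 2) * L * t * p ^ 2))
    (x v : ℕ → EuclideanSpace ℝ (Fin n))
    (hupd : ∀ k, x (k + 1) = x k - t • (f' (x k) + v k))
    (hv : ∀ k, ‖v k‖ ≤ p * ‖f' (x k)‖) :
    (∀ T : ℕ, 1 ≤ T →
      (1 - p - ((1 / 2) * L * t + L * t * p + (1 / 2) * L * t * p ^ 2)) * t *
          ∑ k ∈ Finset.range T, ‖f' (x k)‖ ^ 2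
        ≤ f (x 0) - fstar) ∧
    (∀ T : ℕ, 1 ≤ T → ∃ k < T,
      ‖f' (x k)‖ ^ 2
        ≤ (f (x 0) - fstar) /
            ((1 - p - ((1 / 2) * L * t + L * t * p + (1 / 2) * L * t * p ^ 2)) * t * T)) ∧
    (∀ δ : ℝ, 0 < δ → ∃ k : ℕ,
      k ≤ ⌈(f (x 0) - fstar) /
            ((1 - p - ((1 / 2) * L * t + L * t * p + (1 / 2) * L * t * p ^ 2)) * t * δ ^ 2)⌉₊ ∧
      ‖f' (x k)‖ ≤ δ) := by
  have hct : 0 < perturbedDescentFactor L t p * t := mul_pos heps ht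
  have hstep : ∀ k, perturbedDescentFactor L t p * t * ‖f' (x k)‖ ^ 2 ≤
      f (x k) - f (x (k + 1)) := fun k => by
    rw [hupd k]
    exact le_sub_of_perturbed_gradient_step hdiff hL.le hlip ht.le (hv k)
  have hsum : ∀ T, perturbedDescentFactor L t p * t * ∑ k ∈ range T, ‖f' (x k)‖ ^ 2 ≤
      f (x 0) - fstar := fun T =>
    (mul_sum_range_le_sub_of_mul_le_sub hstep T).trans (by linarith [hbdd (x T)])
  refine ⟨fun T _ => hsum T, fun T hT => exists_lt_le_div_of_mul_sum_range_le hct hT (hsum T),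
    fun δ hδ => ?_⟩
  obtain ⟨k, hk, hle⟩ := exists_le_ceil_le_of_mul_sum_range_le hct hsum (pow_pos hδ 2)
  exact ⟨k, hk, (pow_le_pow_iff_left₀ (norm_nonneg _) hδ.le two_ne_zero).1 hle⟩

/-- Convergence of perturbed gradient descent: for a lower-bounded `f` with
`L`-Lipschitz gradient and perturbed updates `x_{k+1} = x_k − t(∇f(x_k) + v_k)`
with `‖v_k‖ ≤ p‖∇f(x_k)‖`, the weighted sum of squared gradient norms is
bounded by the initial optimality gap, the minimum squared gradient norm over
the first `T` iterates decays like `1/T`, and a `δ`-small gradient is reached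
after at most `⌈(f(x₀) − f*)/((1−p−ε)tδ²)⌉` iterations. -/
theorem perturbed_gradient_descent_convergence {n : ℕ}
    (f : EuclideanSpace ℝ (Fin n) → ℝ)
    (f' : EuclideanSpace ℝ (Fin n) → EuclideanSpace ℝ (Fin n))
    (hdiff : ∀ x, HasGradientAt f (f' x) x)
    (L : ℝ) (hL : 0 < L)
    (hlip : ∀ x y, ‖f' x - f' y‖ ≤ L * ‖x - y‖)
    (fstar : ℝ) (hbdd : ∀ x, fstar ≤ f x)
    (p : ℝ) (hp : 0 ≤ p) (hp1 : p < 1)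
    (t : ℝ) (ht : 0 < t)
    (heps : 0 < 1 - p - ((1 / 2) * L * t + L * t * p + (1 / 2) * L * t * p ^ 2))
    (x v : ℕ → EuclideanSpace ℝ (Fin n))
    (hupd : ∀ k, x (k + 1) = x k - t • (f' (x k) + v k))
    (hv : ∀ k, ‖v k‖ ≤ p * ‖f' (x k)‖) :
    (∀ T : ℕ, 1 ≤ T →
      (1 - p - ((1 / 2) * L * t + L * t * p + (1 / 2) * L * t * p ^ 2)) * t *
          ∑ k ∈ Finset.range T, ‖f' (x k)‖ ^ 2
        ≤ f (x 0) - fstar) ∧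
    (∀ T : ℕ, 1 ≤ T → ∃ k < T,
      ‖f' (x k)‖ ^ 2
        ≤ (f (x 0) - fstar) /
            ((1 - p - ((1 / 2) * L * t + L * t * p + (1 / 2) * L * t * p ^ 2)) * t * T)) ∧
    (∀ δ : ℝ, 0 < δ → ∃ k : ℕ,
      k ≤ ⌈(f (x 0) - fstar) /
            ((1 - p - ((1 / 2) * L * t + L * t * p + (1 / 2) * L * t * p ^ 2)) * t * δ ^ 2)⌉₊ ∧
      ‖f' (x k)‖ ≤ δ) :=
  perturbed_gradient_descent_convergence_general f f' hdiff L hL hlip fstar hbdd p t ht heps x v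
    hupd hv
end
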